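/- arXiv:2207.11855 — 3 statements merged into one kernel-verified Lean document; each statement's English description precedes it below -/
import Mathlib

section
/- The function F₁ : (0,∞) → ℝ defined by F₁(x) = erfc(x) · e^{x²} is strictly decreasing on (0,∞), with F₁(x) → 1 as x → 0⁺ and F₁(x) → 0 as x → +∞. -/
open Real Filter Set

/-- Gauss error function `erf x = (2/√π) ∫₀ˣ e^{−t²} dt`. -/
noncomputable def erf (x : ℝ) : ℝ := (2 / Real.sqrt π) * ∫ t in (0:ℝ)..x, Real.exp (-t ^ 2)

/-- Complementary error function. -/
noncomputable def erfc (x : ℝ) : ℝ := 1 - erf x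

/-- `F₁(x) = erfc(x) · e^{x²}`. -/
noncomputable def F1f (x : ℝ) : ℝ := erfc x * Real.exp (x ^ 2)

/-!
Writing `erfc x = (2/√π) ∫ₓ^∞ e^{-t²} dt`, the function `F₁` satisfies the linear ODE
`F₁' = 2x F₁ - 2/√π`. Since `∫ₓ^∞ t e^{-t²} dt = e^{-x²}/2`, the positivity of
`∫ₓ^∞ (t - x) e^{-t²} dt` gives `x F₁(x) < 1/√π` for every real `x`. Hence `F₁' < 0`
everywhere, and `0 ≤ F₁(x) < 1/(√π x)` forces `F₁ → 0` at `+∞`; the limit at `0⁺` is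
`F₁(0) = 1` by continuity.
-/

open MeasureTheory

lemma integrable_exp_neg_sq : Integrable fun t : ℝ => exp (-t ^ 2) := by
  simpa using integrable_exp_neg_mul_sq one_pos

lemma integrable_mul_exp_neg_sq : Integrable fun t : ℝ => t * exp (-t ^ 2) := by
  simpa using integrable_mul_exp_neg_mul_sq one_pos

lemma erfc_eq_integral_Ioi (x : ℝ) : erfc x = 2 / √π * ∫ t in Ioi x, exp (-t ^ 2) := by
  have hsplit := intervalIntegral.integral_Ioi_sub_Ioi' (μ := volume)
    (integrable_exp_neg_sq.integrableOn (s := Ioi 0))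
    (integrable_exp_neg_sq.integrableOn (s := Ioi x))
  have hgauss : ∫ t in Ioi (0 : ℝ), exp (-t ^ 2) = √π / 2 := by
    simpa using integral_gaussian_Ioi 1
  have hπ : √π ≠ 0 := (sqrt_pos.mpr pi_pos).ne'
  rw [erfc, erf, ← hsplit, hgauss]
  field_simp
  ring

lemma integral_Ioi_mul_exp_neg_sq (x : ℝ) :
    ∫ t in Ioi x, t * exp (-t ^ 2) = exp (-x ^ 2) / 2 := by
  have hderiv (t : ℝ) : HasDerivAt (fun t => -exp (-t ^ 2) / 2) (t * exp (-t ^ 2)) t := by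
    refine ((hasDerivAt_pow 2 t).neg.exp.neg.div_const 2).congr_deriv ?_
    simp only [Pi.neg_apply, Nat.cast_ofNat, Nat.add_one_sub_one, pow_one, mul_neg, neg_neg]
    ring
  have hlim : Tendsto (fun t : ℝ => -exp (-t ^ 2) / 2) atTop (nhds 0) := by
    have hsq : Tendsto (fun t : ℝ => -t ^ 2) atTop atBot :=
      tendsto_neg_atTop_atBot.comp (tendsto_pow_atTop two_ne_zero)
    simpa using (tendsto_exp_atBot.comp hsq).neg.div_const 2
  rw [integral_Ioi_of_hasDerivAt_of_tendsto' (fun t _ => hderiv t)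
    integrable_mul_exp_neg_sq.integrableOn hlim]
  ring

lemma mul_integral_Ioi_exp_neg_sq_lt (x : ℝ) :
    x * ∫ t in Ioi x, exp (-t ^ 2) < exp (-x ^ 2) / 2 := by
  have hint : IntegrableOn (fun t => (t - x) * exp (-t ^ 2)) (Ioi x) :=
    (integrable_mul_exp_neg_sq.sub (integrable_exp_neg_sq.const_mul x)).integrableOn.congr_fun
      (fun t _ => by simp only [Pi.sub_apply]; ring) measurableSet_Ioi
  have hpos : 0 < ∫ t in Ioi x, (t - x) * exp (-t ^ 2) := by
    have hsupp : Function.support (fun t => (t - x) * exp (-t ^ 2)) ∩ Ioi x = Ioi x :=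
      inter_eq_self_of_subset_right fun t ht =>
        (mul_pos (sub_pos.mpr ht) (exp_pos _)).ne'
    rw [setIntegral_pos_iff_support_of_nonneg_ae _ hint, hsupp, volume_Ioi]
    · exact ENNReal.zero_lt_top
    · filter_upwards [ae_restrict_mem measurableSet_Ioi] with t ht
      exact mul_nonneg (sub_nonneg.mpr (le_of_lt ht)) (exp_pos _).le
  have hsub : ∫ t in Ioi x, (t - x) * exp (-t ^ 2)
      = exp (-x ^ 2) / 2 - x * ∫ t in Ioi x, exp (-t ^ 2) := by
    simp_rw [sub_mul]
    rw [integral_sub integrable_mul_exp_neg_sq.integrableOn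
      (integrable_exp_neg_sq.const_mul x).integrableOn, integral_const_mul,
      integral_Ioi_mul_exp_neg_sq]
  linarith

lemma F1f_eq (x : ℝ) : F1f x = 2 / √π * exp (x ^ 2) * ∫ t in Ioi x, exp (-t ^ 2) := by
  rw [F1f, erfc_eq_integral_Ioi]
  ring

lemma F1f_nonneg (x : ℝ) : 0 ≤ F1f x := by
  rw [F1f_eq]
  have := setIntegral_nonneg (μ := volume) (measurableSet_Ioi (a := x))
    fun t _ => (exp_pos (-t ^ 2)).le
  positivity

lemma mul_F1f_lt (x : ℝ) : x * F1f x < 1 / √π := by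
  have hπ : 0 < √π := sqrt_pos.mpr pi_pos
  have hexp : exp (x ^ 2) * exp (-x ^ 2) = 1 := by rw [← exp_add]; simp
  calc x * F1f x = 2 / √π * exp (x ^ 2) * (x * ∫ t in Ioi x, exp (-t ^ 2)) := by
        rw [F1f_eq]; ring
    _ < 2 / √π * exp (x ^ 2) * (exp (-x ^ 2) / 2) :=
        mul_lt_mul_of_pos_left (mul_integral_Ioi_exp_neg_sq_lt x) (by positivity)
    _ = 1 / √π := by field_simp; linear_combination hexp

lemma hasDerivAt_erf (x : ℝ) : HasDerivAt erf (2 / √π * exp (-x ^ 2)) x :=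
  ((continuous_exp.comp (continuous_pow 2).neg).integral_hasStrictDerivAt 0 x).hasDerivAt
    |>.const_mul (2 / √π)

lemma hasDerivAt_F1f (x : ℝ) : HasDerivAt F1f (2 * x * F1f x - 2 / √π) x := by
  have hexp : exp (-x ^ 2) * exp (x ^ 2) = 1 := by rw [← exp_add]; simp
  refine (((hasDerivAt_erf x).const_sub 1).mul (hasDerivAt_pow 2 x).exp).congr_deriv ?_
  simp only [F1f, erfc, Nat.cast_ofNat, Nat.add_one_sub_one, pow_one]
  linear_combination (-2 / √π) * hexp

lemma strictAnti_F1f : StrictAnti F1f := by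
  refine strictAnti_of_hasDerivAt_neg hasDerivAt_F1f fun x => ?_
  rw [div_eq_mul_one_div 2]
  linarith [mul_F1f_lt x]

lemma tendsto_F1f_nhdsGT_zero : Tendsto F1f (nhdsWithin 0 (Ioi 0)) (nhds 1) := by
  have hF0 : F1f 0 = 1 := by simp [F1f, erfc, erf]
  rw [← hF0]
  exact (hasDerivAt_F1f 0).continuousAt.continuousWithinAt

lemma tendsto_F1f_atTop : Tendsto F1f atTop (nhds 0) := by
  have hbound : Tendsto (fun x : ℝ => 1 / √π * x⁻¹) atTop (nhds 0) := by
    simpa using tendsto_inv_atTop_zero.const_mul (1 / √π)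
  refine tendsto_of_tendsto_of_tendsto_of_le_of_le' tendsto_const_nhds hbound
    (Eventually.of_forall F1f_nonneg) ?_
  filter_upwards [eventually_gt_atTop 0] with x hx
  rw [← div_eq_mul_inv, le_div_iff₀ hx, mul_comm]
  exact (mul_F1f_lt x).le

/-- `F₁` is strictly decreasing on `(0,∞)`, with `F₁(x) → 1` as `x → 0⁺`
and `F₁(x) → 0` as `x → +∞`. -/
theorem F1f_strictAntiOn_limits :
    StrictAntiOn F1f (Set.Ioi (0 : ℝ)) ∧
    Tendsto F1f (nhdsWithin 0 (Set.Ioi 0)) (nhds 1) ∧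
    Tendsto F1f atTop (nhds 0) :=
  ⟨strictAnti_F1f.strictAntiOn _, tendsto_F1f_nhdsGT_zero, tendsto_F1f_atTop⟩
end

section
/- Let α_s and d_l be positive real constants. The function M : (0,∞) → ℝ defined by M(x) = 1/Q((√α_s/√d_l) x) is strictly decreasing on (0,∞), with M(x) → +∞ as x → 0⁺ and M(x) → 1 as x → +∞. -/
/-! With `T(x) = ∫ₓ^∞ e^{-t²} dt` we have `Q(x) = 2x e^{x²} T(x)`. For `x > 0`,
`x e^{-x²}/(1 + 2x²) < T(x) < e^{-x²}/(2x)`: in each case the difference of the two sides tends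
to `0` at `∞` and is strictly monotone, with the right sign of derivative. The lower bound is
exactly `Q' > 0`, and the two bounds squeeze `Q(x)` between `2x²/(1 + 2x²)` and `1`, so `Q → 1`
at `∞`; since `Q(0) = 0` and `Q > 0` on `(0, ∞)`, `M = 1/Q(c·)` blows up at `0⁺`. -/

open Real Filter Set Topology

/-- `Q(x) = √π · x · e^{x²} · erfc(x)`. -/
noncomputable def Qf (x : ℝ) : ℝ := Real.sqrt π * x * Real.exp (x ^ 2) * erfc x

/-- `M(x) = 1/Q((√α_s/√d_l)x)`. -/
noncomputable def Mf (αs dl : ℝ) (x : ℝ) : ℝ :=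
  1 / Qf ((Real.sqrt αs / Real.sqrt dl) * x)

lemma pos_of_hasDerivAt_neg_of_tendsto_zero {f f' : ℝ → ℝ} {a x : ℝ}
    (hf : ∀ y ∈ Ioi a, HasDerivAt f (f' y) y) (hf' : ∀ y ∈ Ioi a, f' y < 0)
    (hlim : Tendsto f atTop (𝓝 0)) (hx : a < x) : 0 < f x := by
  have hanti : StrictAntiOn f (Ioi a) :=
    strictAntiOn_of_hasDerivWithinAt_neg (convex_Ioi a)
      (fun y hy ↦ (hf y hy).continuousAt.continuousWithinAt)
      (by rw [interior_Ioi]; exact fun y hy ↦ (hf y hy).hasDerivWithinAt)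
      (by rwa [interior_Ioi])
  have hx1 : a < x + 1 := by linarith
  have h_nonneg : 0 ≤ f (x + 1) := le_of_tendsto hlim <| by
    filter_upwards [eventually_ge_atTop (x + 1)] with y hy
    exact hanti.antitoneOn hx1 (hx1.trans_le hy) hy
  exact h_nonneg.trans_lt (hanti hx hx1 (lt_add_one x))

/-- `gaussTail x = ∫ₓ^∞ e^{-t²} dt = (√π / 2) erfc x`. -/
noncomputable def gaussTail (x : ℝ) : ℝ := √π / 2 - ∫ t in (0 : ℝ)..x, exp (-t ^ 2)

lemma hasDerivAt_gaussTail (x : ℝ) : HasDerivAt gaussTail (-exp (-x ^ 2)) x := by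
  have hcont : Continuous fun t : ℝ ↦ exp (-t ^ 2) := by fun_prop
  exact ((hcont.integral_hasStrictDerivAt 0 x).hasDerivAt).const_sub (√π / 2)

lemma continuous_gaussTail : Continuous gaussTail :=
  continuous_iff_continuousAt.2 fun x ↦ (hasDerivAt_gaussTail x).continuousAt

lemma tendsto_gaussTail_atTop : Tendsto gaussTail atTop (𝓝 0) := by
  have hint : MeasureTheory.IntegrableOn (fun t : ℝ ↦ exp (-t ^ 2)) (Ioi 0) := by
    simpa using (integrable_exp_neg_mul_sq one_pos).integrableOn (s := Ioi 0)
  have hI := MeasureTheory.intervalIntegral_tendsto_integral_Ioi 0 hint tendsto_id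
  have hval : ∫ t in Ioi (0 : ℝ), exp (-t ^ 2) = √π / 2 := by
    simpa using integral_gaussian_Ioi 1
  rw [hval] at hI
  have := hI.const_sub (√π / 2)
  rwa [sub_self] at this

lemma tendsto_exp_neg_sq_div_atTop :
    Tendsto (fun x : ℝ ↦ exp (-x ^ 2) / (2 * x)) atTop (𝓝 0) := by
  have hexp : Tendsto (fun x : ℝ ↦ exp (-x ^ 2)) atTop (𝓝 0) :=
    tendsto_exp_neg_atTop_nhds_zero.comp (tendsto_pow_atTop two_ne_zero)
  have hinv : Tendsto (fun x : ℝ ↦ (2 * x)⁻¹) atTop (𝓝 0) :=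
    (tendsto_id.const_mul_atTop two_pos).inv_tendsto_atTop
  simpa [div_eq_mul_inv] using hexp.mul hinv

lemma hasDerivAt_exp_neg_sq (x : ℝ) :
    HasDerivAt (fun t : ℝ ↦ exp (-t ^ 2)) (-(2 * x) * exp (-x ^ 2)) x := by
  simpa [mul_comm] using ((hasDerivAt_pow 2 x).neg).exp

lemma mul_exp_neg_sq_div_lt_gaussTail {x : ℝ} (hx : 0 < x) :
    x * exp (-x ^ 2) / (1 + 2 * x ^ 2) < gaussTail x := by
  have hderiv : ∀ y ∈ Ioi (0 : ℝ), HasDerivAt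
      (fun y ↦ gaussTail y - y * exp (-y ^ 2) / (1 + 2 * y ^ 2))
      (-2 * exp (-y ^ 2) / (1 + 2 * y ^ 2) ^ 2) y := by
    intro y _
    have hnum : HasDerivAt (fun z : ℝ ↦ z * exp (-z ^ 2))
        (1 * exp (-y ^ 2) + y * (-(2 * y) * exp (-y ^ 2))) y :=
      (hasDerivAt_id' y).fun_mul (hasDerivAt_exp_neg_sq y)
    have hden : HasDerivAt (fun z : ℝ ↦ 1 + 2 * z ^ 2) (2 * (2 * y)) y := by
      simpa using ((hasDerivAt_pow 2 y).const_mul 2).const_add 1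
    refine ((hasDerivAt_gaussTail y).sub (hnum.div hden (by positivity))).congr_deriv ?_
    field_simp
    ring
  have hlim : Tendsto (fun y ↦ gaussTail y - y * exp (-y ^ 2) / (1 + 2 * y ^ 2)) atTop (𝓝 0) := by
    have hlower : Tendsto (fun y : ℝ ↦ y * exp (-y ^ 2) / (1 + 2 * y ^ 2)) atTop (𝓝 0) := by
      refine squeeze_zero' ?_ ?_ tendsto_exp_neg_sq_div_atTop
      · filter_upwards [eventually_gt_atTop 0] with y hy
        positivity
      · filter_upwards [eventually_gt_atTop 0] with y hy
        rw [div_le_div_iff₀ (by positivity) (by positivity)]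
        nlinarith [exp_pos (-y ^ 2)]
    simpa using tendsto_gaussTail_atTop.sub hlower
  have := pos_of_hasDerivAt_neg_of_tendsto_zero hderiv
    (fun y _ ↦ div_neg_of_neg_of_pos (by linarith [exp_pos (-y ^ 2)]) (by positivity)) hlim hx
  linarith

lemma gaussTail_lt_exp_neg_sq_div {x : ℝ} (hx : 0 < x) : gaussTail x < exp (-x ^ 2) / (2 * x) := by
  have hderiv : ∀ y ∈ Ioi (0 : ℝ), HasDerivAt (fun y ↦ exp (-y ^ 2) / (2 * y) - gaussTail y)
      (-exp (-y ^ 2) / (2 * y ^ 2)) y := by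
    intro y hy
    have hy : y ≠ 0 := (mem_Ioi.1 hy).ne'
    refine (((hasDerivAt_exp_neg_sq y).div ((hasDerivAt_id' y).const_mul 2)
      (by simpa using hy)).sub (hasDerivAt_gaussTail y)).congr_deriv ?_
    field_simp
    ring
  have hlim : Tendsto (fun y ↦ exp (-y ^ 2) / (2 * y) - gaussTail y) atTop (𝓝 0) := by
    simpa using tendsto_exp_neg_sq_div_atTop.sub tendsto_gaussTail_atTop
  have := pos_of_hasDerivAt_neg_of_tendsto_zero hderiv
    (fun y hy ↦ div_neg_of_neg_of_pos (by linarith [exp_pos (-y ^ 2)])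
      (by have : (0 : ℝ) < y := hy; positivity)) hlim hx
  linarith

lemma Qf_eq_mul_gaussTail (x : ℝ) : Qf x = 2 * x * exp (x ^ 2) * gaussTail x := by
  have hπ : √π ≠ 0 := (sqrt_pos.2 pi_pos).ne'
  simp only [Qf, erfc, erf, gaussTail]
  field_simp

lemma continuous_Qf : Continuous Qf := by
  rw [funext Qf_eq_mul_gaussTail]
  exact (by fun_prop : Continuous fun x : ℝ ↦ 2 * x * exp (x ^ 2)).mul continuous_gaussTail

lemma div_lt_Qf {x : ℝ} (hx : 0 < x) : 2 * x ^ 2 / (1 + 2 * x ^ 2) < Qf x := by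
  calc 2 * x ^ 2 / (1 + 2 * x ^ 2)
      = 2 * x * exp (x ^ 2) * (x * exp (-x ^ 2) / (1 + 2 * x ^ 2)) := by
        rw [exp_neg]; field_simp
    _ < 2 * x * exp (x ^ 2) * gaussTail x := by
        gcongr; exact mul_exp_neg_sq_div_lt_gaussTail hx
    _ = Qf x := (Qf_eq_mul_gaussTail x).symm

lemma Qf_pos {x : ℝ} (hx : 0 < x) : 0 < Qf x :=
  lt_trans (by positivity) (div_lt_Qf hx)

lemma Qf_lt_one {x : ℝ} (hx : 0 < x) : Qf x < 1 := by
  calc Qf x = 2 * x * exp (x ^ 2) * gaussTail x := Qf_eq_mul_gaussTail x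
    _ < 2 * x * exp (x ^ 2) * (exp (-x ^ 2) / (2 * x)) := by
        gcongr; exact gaussTail_lt_exp_neg_sq_div hx
    _ = 1 := by rw [exp_neg]; field_simp

lemma hasDerivAt_Qf (x : ℝ) :
    HasDerivAt Qf (2 * exp (x ^ 2) * (1 + 2 * x ^ 2) * gaussTail x - 2 * x) x := by
  rw [funext Qf_eq_mul_gaussTail]
  have hexp : HasDerivAt (fun z : ℝ ↦ exp (z ^ 2)) (exp (x ^ 2) * (2 * x)) x := by
    simpa using (hasDerivAt_pow 2 x).exp
  have hlin : HasDerivAt (fun z : ℝ ↦ 2 * z) 2 x := by simpa using (hasDerivAt_id' x).const_mul 2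
  refine ((hlin.fun_mul hexp).fun_mul (hasDerivAt_gaussTail x)).congr_deriv ?_
  rw [exp_neg]
  field_simp
  ring

lemma Qf_strictMonoOn : StrictMonoOn Qf (Ioi 0) := by
  refine strictMonoOn_of_deriv_pos (convex_Ioi 0) continuous_Qf.continuousOn fun x hx ↦ ?_
  rw [interior_Ioi, mem_Ioi] at hx
  rw [(hasDerivAt_Qf x).deriv, sub_pos]
  have hlow := mul_exp_neg_sq_div_lt_gaussTail hx
  rw [div_lt_iff₀ (by positivity)] at hlow
  calc 2 * x = 2 * exp (x ^ 2) * (x * exp (-x ^ 2)) := by rw [exp_neg]; field_simp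
    _ < 2 * exp (x ^ 2) * (gaussTail x * (1 + 2 * x ^ 2)) := by gcongr
    _ = 2 * exp (x ^ 2) * (1 + 2 * x ^ 2) * gaussTail x := by ring

lemma tendsto_Qf_atTop : Tendsto Qf atTop (𝓝 1) := by
  have hlower : Tendsto (fun x : ℝ ↦ 2 * x ^ 2 / (1 + 2 * x ^ 2)) atTop (𝓝 1) := by
    have hinv : Tendsto (fun x : ℝ ↦ (1 + 2 * x ^ 2)⁻¹) atTop (𝓝 0) :=
      (tendsto_atTop_add_const_left _ 1
        ((tendsto_pow_atTop two_ne_zero).const_mul_atTop two_pos)).inv_tendsto_atTop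
    have := hinv.const_sub 1
    rw [sub_zero] at this
    refine this.congr fun x ↦ ?_
    field_simp
    ring
  refine tendsto_of_tendsto_of_tendsto_of_le_of_le' hlower tendsto_const_nhds ?_ ?_ <;>
    filter_upwards [eventually_gt_atTop 0] with x hx
  exacts [(div_lt_Qf hx).le, (Qf_lt_one hx).le]

/-- `M` is strictly decreasing on `(0,∞)`, with `M(x) → +∞` as `x → 0⁺`
and `M(x) → 1` as `x → +∞`. -/
theorem Mf_strictAntiOn_limits (αs dl : ℝ) (hαs : 0 < αs) (hdl : 0 < dl) :
    StrictAntiOn (Mf αs dl) (Set.Ioi (0 : ℝ)) ∧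
    Tendsto (Mf αs dl) (nhdsWithin 0 (Set.Ioi 0)) atTop ∧
    Tendsto (Mf αs dl) atTop (nhds 1) := by
  set c := √αs / √dl
  have hc : 0 < c := div_pos (sqrt_pos.2 hαs) (sqrt_pos.2 hdl)
  have hMf : Mf αs dl = fun x ↦ (Qf (c * x))⁻¹ := funext fun x ↦ one_div _
  refine ⟨fun x hx y hy hxy ↦ ?_, ?_, ?_⟩
  · have hcx : 0 < c * x := mul_pos hc hx
    rw [hMf]
    exact inv_strictAnti₀ (Qf_pos hcx)
      (Qf_strictMonoOn hcx (mul_pos hc hy) (mul_lt_mul_of_pos_left hxy hc))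
  · have hQ : Tendsto (fun x ↦ Qf (c * x)) (𝓝[>] 0) (𝓝[>] 0) := by
      refine tendsto_nhdsWithin_iff.2
        ⟨?_, eventually_nhdsWithin_of_forall fun x hx ↦ Qf_pos (mul_pos hc hx)⟩
      simpa [Function.comp_def, Qf] using
        ((continuous_Qf.comp (continuous_const_mul c)).tendsto 0).mono_left nhdsWithin_le_nhds
    exact hMf ▸ tendsto_inv_nhdsGT_zero.comp hQ
  · simpa [hMf] using (tendsto_Qf_atTop.comp (tendsto_id.const_mul_atTop hc)).inv₀ one_ne_zero
end

section
/- Let γ, ρ, α_s, α_l, k_s, k_l, h₀ be positive real constants, T₀, T_∞ real constants, and δ > 0. Define T̂_k = W(δ) = T_∞ + (T₀ − T_∞)/(F₂(δ) + 1) + γρ√(π α_s α_l)/H(δ) and T₁ = T̂_k − h₀√(π α_s) erf(δ)(T̂_k − T_∞)/(k_s + h₀√(π α_s) erf(δ)). Then G(δ) = T̂_k, where G(x) = [γρα_sα_l Q₁(x) Q((√α_s/√α_l)x) + T₁ k_s α_l Q((√α_s/√α_l)x) + T₀ k_l α_s Q₁(x)] / [k_s α_l Q((√α_s/√α_l)x)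 + k_l α_s Q₁(x)]. -/
open Real Filter Set

open MeasureTheory in
lemma gauss_integrable : MeasureTheory.Integrable (fun t : ℝ => Real.exp (-t ^ 2)) := by
  simpa [neg_mul] using integrable_exp_neg_mul_sq (one_pos)

lemma erf_pos' {x : ℝ} (hx : 0 < x) : 0 < erf x := by
  apply mul_pos (by positivity)
  exact intervalIntegral.intervalIntegral_pos_of_pos
    (gauss_integrable.intervalIntegrable) (fun t => by positivity) hx

open MeasureTheory in
lemma erf_lt_one' {x : ℝ} (hx : 0 < x) : erf x < 1 := by
  have hIoi : ∫ t in Ioi (0:ℝ), Real.exp (-t ^ 2) = Real.sqrt π / 2 := by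
    simpa [neg_mul] using integral_gaussian_Ioi 1
  have hpos : 0 < ∫ t in Ioi x, Real.exp (-t ^ 2) := by
    rw [setIntegral_pos_iff_support_of_nonneg_ae
      (Eventually.of_forall fun t => (Real.exp_pos _).le) gauss_integrable.integrableOn]
    have : (Function.support fun t : ℝ => Real.exp (-t ^ 2)) = univ := by
      ext t; simp [Function.mem_support, (Real.exp_pos _).ne']
    simp [this]
  have hsplit : (∫ t in Ioc 0 x, Real.exp (-t ^ 2)) + ∫ t in Ioi x, Real.exp (-t ^ 2)
      = Real.sqrt π / 2 := by
    rw [← hIoi, ← setIntegral_union (Ioc_disjoint_Ioi le_rfl) measurableSet_Ioi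
      gauss_integrable.integrableOn gauss_integrable.integrableOn,
      Ioc_union_Ioi_eq_Ioi hx.le]
  have hlt : (∫ t in (0:ℝ)..x, Real.exp (-t ^ 2)) < Real.sqrt π / 2 := by
    rw [intervalIntegral.integral_of_le hx.le]
    linarith
  have hsq : (0:ℝ) < Real.sqrt π := Real.sqrt_pos.mpr Real.pi_pos
  calc erf x < (2 / Real.sqrt π) * (Real.sqrt π / 2) :=
        mul_lt_mul_of_pos_left hlt (by positivity)
    _ = 1 := by field_simp

/-- `Q₁(x) = √π · x · e^{x²} · erf(x)`. -/
noncomputable def Q1f (x : ℝ) : ℝ := Real.sqrt π * x * Real.exp (x ^ 2) * erf x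

/-- `F₂(x) = h₀ k_s √(π α_l) e^{−x²} F₁((√α_s/√α_l)x) / (k_l(k_s + h₀√(π α_s) erf(x)))`. -/
noncomputable def F2f (h₀ ks kl αs αl : ℝ) (x : ℝ) : ℝ :=
  h₀ * ks * Real.sqrt (π * αl) * Real.exp (-x ^ 2)
      * F1f ((Real.sqrt αs / Real.sqrt αl) * x)
    / (kl * (ks + h₀ * Real.sqrt (π * αs) * erf x))

/-- `H(x) = h₀ k_s √(π α_l)/(x e^{x²}(k_s + h₀√(π α_s) erf(x)))
           + k_l √(π α_s)/(√α_l · Q((√α_s/√α_l)x))`. -/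
noncomputable def Hf (h₀ ks kl αs αl : ℝ) (x : ℝ) : ℝ :=
  h₀ * ks * Real.sqrt (π * αl)
      / (x * Real.exp (x ^ 2) * (ks + h₀ * Real.sqrt (π * αs) * erf x))
    + kl * Real.sqrt (π * αs)
      / (Real.sqrt αl * Qf ((Real.sqrt αs / Real.sqrt αl) * x))

/-- `W(x) = T_∞ + (T₀ − T_∞)/(F₂(x) + 1) + γρ√(π α_s α_l)/H(x)`. -/
noncomputable def Wf (γ ρ h₀ ks kl αs αl T₀ Tinf : ℝ) (x : ℝ) : ℝ :=
  Tinf + (T₀ - Tinf) / (F2f h₀ ks kl αs αl x + 1)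
    + γ * ρ * Real.sqrt (π * αs * αl) / Hf h₀ ks kl αs αl x

/-- The Rubinstein function `G` with fixed-face temperature `T₁`. -/
noncomputable def Gf (γ ρ αs αl ks kl T₀ T₁ : ℝ) (x : ℝ) : ℝ :=
  (γ * ρ * αs * αl * Q1f x * Qf ((Real.sqrt αs / Real.sqrt αl) * x)
      + T₁ * ks * αl * Qf ((Real.sqrt αs / Real.sqrt αl) * x)
      + T₀ * kl * αs * Q1f x)
    / (ks * αl * Qf ((Real.sqrt αs / Real.sqrt αl) * x) + kl * αs * Q1f x)

/-- With `T̂_k = W(δ)` and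
`T₁ = T̂_k − h₀√(π α_s) erf(δ)(T̂_k − T_∞)/(k_s + h₀√(π α_s) erf(δ))`,
one has `G(δ) = T̂_k`. -/
theorem G_eq_Tk_convective (γ ρ αs αl ks kl h₀ T₀ Tinf δ : ℝ)
    (hγ : 0 < γ) (hρ : 0 < ρ) (hαs : 0 < αs) (hαl : 0 < αl)
    (hks : 0 < ks) (hkl : 0 < kl) (hh₀ : 0 < h₀) (hδ : 0 < δ) :
    Gf γ ρ αs αl ks kl T₀
        (Wf γ ρ h₀ ks kl αs αl T₀ Tinf δ
          - h₀ * Real.sqrt (π * αs) * erf δ * (Wf γ ρ h₀ ks kl αs αl T₀ Tinf δ - Tinf)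
              / (ks + h₀ * Real.sqrt (π * αs) * erf δ)) δ
      = Wf γ ρ h₀ ks kl αs αl T₀ Tinf δ := by
  have hs : (0:ℝ) < Real.sqrt π := Real.sqrt_pos.mpr Real.pi_pos
  have hπαl : Real.sqrt (π * αl) = Real.sqrt π * Real.sqrt αl := Real.sqrt_mul Real.pi_pos.le _
  have hπαs : Real.sqrt (π * αs) = Real.sqrt π * Real.sqrt αs := Real.sqrt_mul Real.pi_pos.le _
  have hπαsαl : Real.sqrt (π * αs * αl) = Real.sqrt π * Real.sqrt αs * Real.sqrt αl := by
    rw [Real.sqrt_mul (by positivity), hπαs]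
  have hapos : 0 < Real.sqrt αs := Real.sqrt_pos.mpr hαs
  have hbpos : 0 < Real.sqrt αl := Real.sqrt_pos.mpr hαl
  have hcδ : 0 < Real.sqrt αs / Real.sqrt αl * δ := by positivity
  have hE := erf_pos' hδ
  have hC : 0 < erfc (Real.sqrt αs / Real.sqrt αl * δ) := by
    have := erf_lt_one' hcδ
    unfold erfc; linarith
  have hA := Real.exp_pos (δ ^ 2)
  have hB := Real.exp_pos ((Real.sqrt αs / Real.sqrt αl * δ) ^ 2)
  simp only [Gf, Wf, F2f, Hf, Qf, Q1f, F1f, Real.exp_neg, hπαl, hπαs, hπαsαl]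
  rw [show αs = Real.sqrt αs ^ 2 from (Real.sq_sqrt hαs.le).symm,
      show αl = Real.sqrt αl ^ 2 from (Real.sq_sqrt hαl.le).symm]
  simp only [Real.sqrt_sq hapos.le, Real.sqrt_sq hbpos.le]
  generalize hEe : erf δ = E at hE ⊢
  generalize hCe : erfc (Real.sqrt αs / Real.sqrt αl * δ) = C at hC ⊢
  generalize hAe : Real.exp (δ ^ 2) = A at hA ⊢
  generalize hBe : Real.exp ((Real.sqrt αs / Real.sqrt αl * δ) ^ 2) = B at hB ⊢
  generalize hae : Real.sqrt αs = a at hapos ⊢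
  generalize hbe : Real.sqrt αl = b at hbpos ⊢
  generalize hse : Real.sqrt π = s at hs ⊢
  have hK : 0 < ks + h₀ * (s * a) * E := by positivity
  have hQc : 0 < s * (a / b * δ) * B * C := by positivity
  have hF2 : 0 < h₀ * ks * (s * b) * A⁻¹ * (C * B) / (kl * (ks + h₀ * (s * a) * E)) + 1 := by
    positivity
  have hH : 0 < h₀ * ks * (s * b) / (δ * A * (ks + h₀ * (s * a) * E))
      + kl * (s * a) / (b * (s * (a / b * δ) * B * C)) := by positivity
  have hGden : 0 < ks * b ^ 2 * (s * (a / b * δ) * B * C) + kl * a ^ 2 * (s * δ * A * E) := by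
    positivity
  field_simp
  ring
end
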